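/- S 0 = 1 (the identity matrix), and for every real p one has S (-p) * S p = 1 = S p * S (-p); in particular every S p is a unit of the 3×3 matrix ring over Λ with inverse S (-p). (Parts (ii) and (iii) of the lemma that the matrices S(2pη) form a group.) -/

import Mathlib

/-!
$S(p) = 1 + pN + \tfrac{p^2}{2}N^2$ for the matrix $N$ with rows $(0, 0, -η')$, $(0, 0, -η)$, $(η, -η', 0)$.
Since $η^2 = η'^2 = 0$, $N^3 = 0$, so this is the (finite) exponential $S(p) = \exp(pN)$, and
$\exp(-pN)\exp(pN) = 1$ holds for the commuting nilpotent elements $±pN$.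
-/

noncomputable section

abbrev Λ : Type := ExteriorAlgebra ℂ (Fin 2 → ℂ)

def η : Λ := ExteriorAlgebra.ι ℂ (Pi.single 0 1)

def η' : Λ := ExteriorAlgebra.ι ℂ (Pi.single 1 1)

def E : Λ := η * η'

def S (p : ℝ) : Matrix (Fin 3) (Fin 3) Λ :=
  !![1 + ((p ^ 2 / 2 : ℝ) : ℂ) • E, 0, -((p : ℂ) • η');
     0, 1 + ((p ^ 2 / 2 : ℝ) : ℂ) • E, -((p : ℂ) • η);
     (p : ℂ) • η, -((p : ℂ) • η'), 1 - ((p ^ 2 : ℝ) : ℂ) • E]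

namespace IsNilpotent

theorem exp_eq_of_pow_three_eq_zero {A : Type*} [Ring A] [Module ℚ A] {a : A} (h : a ^ 3 = 0) :
    exp a = 1 + a + (2 : ℚ)⁻¹ • a ^ 2 := by
  simp [exp_eq_sum h, Finset.sum_range_succ]

end IsNilpotent

lemma η_mul_η : η * η = 0 := ExteriorAlgebra.ι_sq_zero _

lemma η'_mul_η' : η' * η' = 0 := ExteriorAlgebra.ι_sq_zero _

lemma η'_mul_η : η' * η = -E :=
  eq_neg_of_add_eq_zero_left (ExteriorAlgebra.ι_add_mul_swap (R := ℂ) _ _)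

lemma η_mul_E : η * E = 0 := by rw [E, ← mul_assoc, η_mul_η, zero_mul]

lemma E_mul_η' : E * η' = 0 := by rw [E, mul_assoc, η'_mul_η', mul_zero]

lemma η'_mul_E : η' * E = 0 := by rw [E, ← mul_assoc, η'_mul_η, neg_mul, E_mul_η', neg_zero]

def N : Matrix (Fin 3) (Fin 3) Λ :=
  !![0, 0, -η';
     0, 0, -η;
     η, -η', 0]

lemma N_sq : N ^ 2 = !![E, 0, 0; 0, E, 0; 0, 0, -(2 : ℂ) • E] := by
  rw [sq, N, Matrix.mul_fin_three]
  simp only [mul_zero, mul_neg, neg_mul, zero_mul, add_zero, zero_add, neg_neg, neg_zero, neg_smul,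
    η_mul_η, η'_mul_η', η'_mul_η, show η * η' = E from rfl, EmbeddingLike.apply_eq_iff_eq,
    Matrix.vecCons_inj, and_true, true_and]
  module

lemma N_pow_three : N ^ 3 = 0 := by
  rw [pow_succ', N_sq, N, Matrix.mul_fin_three]
  ext i j
  fin_cases i <;> fin_cases j <;> simp [η_mul_E, η'_mul_E]

lemma smul_N_pow_three (t : ℂ) : (t • N) ^ 3 = 0 := by
  rw [smul_pow, N_pow_three, smul_zero]

lemma S_eq_quadratic_in_N (p : ℝ) : S p = 1 + (p : ℂ) • N + ((p : ℂ) ^ 2 / 2) • N ^ 2 := by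
  rw [N_sq, N, Matrix.one_fin_three]
  ext i j
  fin_cases i <;> fin_cases j <;> simp [S]
  module

lemma S_eq_exp (p : ℝ) : S p = IsNilpotent.exp ((p : ℂ) • N) := by
  rw [IsNilpotent.exp_eq_of_pow_three_eq_zero (smul_N_pow_three _), S_eq_quadratic_in_N,
    smul_pow, ← algebraMap_smul ℂ (2⁻¹ : ℚ), smul_smul]
  congr 2
  simp [div_eq_inv_mul]

theorem S_identity_and_inverses :
    S 0 = 1 ∧
    (∀ p : ℝ, S (-p) * S p = 1 ∧ S p * S (-p) = 1) ∧
    (∀ p : ℝ, ∃ u : (Matrix (Fin 3) (Fin 3) Λ)ˣ, u.val = S p ∧ (u⁻¹).val = S (-p)) := by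
  have hinv (p : ℝ) : S (-p) * S p = 1 ∧ S p * S (-p) = 1 := by
    simp only [S_eq_exp, Complex.ofReal_neg, neg_smul]
    exact ⟨IsNilpotent.exp_neg_mul_exp_self ⟨3, smul_N_pow_three p⟩,
      IsNilpotent.exp_mul_exp_neg_self ⟨3, smul_N_pow_three p⟩⟩
  refine ⟨by simp [S_eq_exp], hinv, fun p => ?_⟩
  exact ⟨⟨S p, S (-p), (hinv p).2, (hinv p).1⟩, rfl, rfl⟩
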